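/- Let R be a semiartinian von Neumann regular ring with primitive factors artinian and of finite Loewy length σ+1 with σ ≥ 1. Then every countably generated weakly R-projective right R-module is projective. -/

import Mathlib

/-!
A finitely generated weakly `R`-projective module `M` with `S_{n+1}(M) = M` is projective, by
induction on `n`. Each simple summand of the semisimple module `M / S_n(M)` embeds into a layer
`S_{α+1} / S_α` of `R`, so weak `R`-projectivity lifts the corresponding projections to maps into
`R`; together they give `Ψ : M → Rᵏ` with `ker Ψ ≤ S_n(M)`. Over a von Neumann regular ring,
finitely generated submodules of finitely generated projective modules are direct summands, so
`im Ψ` is projective and `M ≅ ker Ψ × im Ψ`. The kernel is again weakly `R`-projective: weak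
`R`-projectivity passes to submodules because finitely generated semisimple modules are injective
(their annihilator has an artinian, hence semisimple, factor ring).

A countably generated `M` is the union of a chain `F₀ ≤ F₁ ≤ ⋯` of finitely generated
submodules. These are projective, and each `Fₙ` is a direct summand of `Fₙ₊₁`, so sections of
the free presentation of `M` over the `Fₙ` can be chosen compatibly and glued.
-/

universe u

open Submodule

/-- The socle of a module: the supremum of all simple submodules. -/
noncomputable def socle (R : Type u) [Ring R] (M : Type u) [AddCommGroup M] [Module R M] :
    Submodule R M :=
  sSup {S : Submodule R M | IsAtom S}

/-- The Loewy (socle) sequence of a module, defined by transfinite recursion: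
`loewy R M 0 = ⊥`, `loewy R M (α+1) / loewy R M α = Soc (M ⧸ loewy R M α)`, and unions
at limit ordinals. -/
noncomputable def loewy (R : Type u) [Ring R] (M : Type u) [AddCommGroup M] [Module R M]
    (o : Ordinal.{u}) : Submodule R M :=
  o.limitRecOn ⊥ (fun _ N => (socle R (M ⧸ N)).comap N.mkQ)
    (fun o _ IH => ⨆ (b : Ordinal) (h : b < o), IH b h)

/-- The Loewy length of a module: the least ordinal `o` with `loewy R M o = ⊤`. -/
noncomputable def loewyLength (R : Type u) [Ring R] (M : Type u) [AddCommGroup M]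
    [Module R M] : Ordinal.{u} :=
  sInf {o : Ordinal | loewy R M o = ⊤}

/-- A ring is semiartinian if every nonzero module has a nonzero socle. -/
def IsSemiartinianRing (R : Type u) [Ring R] : Prop :=
  ∀ (M : Type u) [AddCommGroup M] [Module R M], Nontrivial M → socle R M ≠ ⊥

/-- A ring is von Neumann regular if for every `r` there is `s` with `r * s * r = r`. -/
def IsVonNeumannRegularRing (R : Type u) [Ring R] : Prop :=
  ∀ r : R, ∃ s : R, r * s * r = r

/-- `R` has primitive factors artinian: for every primitive ideal `P` (= annihilator of a
simple module), the factor `R/P` is artinian. -/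
def HasPrimitiveFactorsArtinian (R : Type u) [Ring R] : Prop :=
  ∀ (M : Type u) [AddCommGroup M] [Module R M], IsSimpleModule R M →
    IsArtinian R (R ⧸ (Module.annihilator R M : Submodule R R))

/-- The `α`-th layer of the Loewy sequence of `R`, as a submodule of `R ⧸ loewy R R α`. -/
noncomputable def loewyLayer (R : Type u) [Ring R] (α : Ordinal.{u}) :
    Submodule R (R ⧸ loewy R R α) :=
  (loewy R R (α + 1)).map (loewy R R α).mkQ

/-- The canonical projection `π_α : S_{α+1} → S_{α+1}/S_α`. -/
noncomputable def layerProj (R : Type u) [Ring R] (α : Ordinal.{u}) :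
    (loewy R R (α + 1) : Submodule R R) →ₗ[R] (loewyLayer R α) :=
  LinearMap.codRestrict _ ((loewy R R α).mkQ.comp (loewy R R (α + 1)).subtype)
    (fun x => ⟨(x : R), x.2, rfl⟩)

/-- `M` is weakly `R`-projective: every homomorphism from `M` to a layer `S_{α+1}/S_α`
(`0 < α`) with finitely generated image factors through `π_α : S_{α+1} → S_{α+1}/S_α`. -/
def IsWeaklyRProjective (R : Type u) [Ring R] (M : Type u) [AddCommGroup M]
    [Module R M] : Prop :=
  ∀ α : Ordinal.{u}, 0 < α →
    ∀ φ : M →ₗ[R] (loewyLayer R α), (LinearMap.range φ).FG →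
      ∃ ψ : M →ₗ[R] (loewy R R (α + 1) : Submodule R R), (layerProj R α).comp ψ = φ

/-- `M` is layer projective: for each `0 < α`, every simple submodule of the `α`-th layer of
`M` is isomorphic to a simple (direct summand) submodule of the `α`-th layer of `R`, i.e. the
`α`-th layer of `M` is a projective `R/S_α`-module. -/
def IsLayerProjective (R : Type u) [Ring R] (M : Type u) [AddCommGroup M]
    [Module R M] : Prop :=
  ∀ α : Ordinal.{u}, 0 < α →
    ∀ T : Submodule R ((loewy R M (α + 1)).map (loewy R M α).mkQ), IsAtom T →
      ∃ T' : Submodule R (loewyLayer R α), IsAtom T' ∧ Nonempty (T ≃ₗ[R] T')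

/-- The submodule `M·S` of `M`, generated by all products `s • m` with `s ∈ S`. -/
def smulSub (R : Type u) [Ring R] (M : Type u) [AddCommGroup M] [Module R M]
    (S : Submodule R R) : Submodule R M :=
  Submodule.span R {x : M | ∃ s ∈ S, ∃ m : M, s • m = x}

section Loewy

variable {R : Type u} [Ring R] {M N : Type u} [AddCommGroup M] [Module R M]
  [AddCommGroup N] [Module R N]

theorem loewy_zero : loewy R M 0 = ⊥ := Ordinal.limitRecOn_zero _ _ _

theorem loewy_succ (o : Ordinal.{u}) :
    loewy R M (o + 1) = (socle R (M ⧸ loewy R M o)).comap (loewy R M o).mkQ := by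
  rw [loewy, Ordinal.limitRecOn_add_one]
  rfl

theorem loewy_natCast_succ (n : ℕ) :
    loewy R M ((n + 1 : ℕ) : Ordinal) =
      (socle R (M ⧸ loewy R M n)).comap (loewy R M n).mkQ := by
  rw [Nat.cast_succ, loewy_succ]

instance isSemisimpleModule_socle : IsSemisimpleModule R (socle R M) := by
  rw [socle, sSup_eq_iSup]
  refine isSemisimpleModule_biSup_of_isSemisimpleModule_submodule fun S hS => ?_
  have := isSimpleModule_iff_isAtom.2 hS
  infer_instance

theorem le_socle (U : Submodule R M) [IsSemisimpleModule R U] : U ≤ socle R M := by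
  rw [← U.map_subtype_top, map_le_iff_le_comap, ← IsSemisimpleModule.sSup_simples_eq_top R U]
  refine sSup_le fun W (hW : IsSimpleModule R W) => map_le_iff_le_comap.mp (le_sSup ?_)
  exact isSimpleModule_iff_isAtom.mp (.congr (W.equivMapOfInjective _ U.injective_subtype).symm)

theorem map_socle_le (f : M →ₗ[R] N) : (socle R M).map f ≤ socle R N := by
  have := IsSemisimpleModule.range (f ∘ₗ (socle R M).subtype)
  rw [LinearMap.range_comp, range_subtype] at this
  exact le_socle _

theorem comap_socle_le {f : M →ₗ[R] N} (hf : Function.Injective f) :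
    (socle R N).comap f ≤ socle R M := by
  have := IsSemisimpleModule.of_injective
    ((f.restrict (p := (socle R N).comap f) (q := socle R N) fun _ h => h)) fun x y h =>
      Subtype.ext (hf (congrArg Subtype.val h))
  exact le_socle _

theorem isSemisimpleModule_of_socle_eq_top (h : socle R M = ⊤) : IsSemisimpleModule R M :=
  .of_sSup_simples_eq_top <| by simpa only [socle, isSimpleModule_iff_isAtom] using h

theorem map_loewy_le (f : M →ₗ[R] N) (n : ℕ) : (loewy R M n).map f ≤ loewy R N n := by
  induction n with
  | zero => simp [loewy_zero]
  | succ n ih =>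
    rw [loewy_natCast_succ, loewy_natCast_succ, map_le_iff_le_comap]
    exact fun x hx => map_socle_le (mapQ _ _ f (map_le_iff_le_comap.mp ih)) ⟨_, hx, rfl⟩

theorem comap_subtype_loewy_le (K : Submodule R M) (n : ℕ) :
    (loewy R M n).comap K.subtype ≤ loewy R K n := by
  induction n with
  | zero => simp [loewy_zero]
  | succ n ih =>
    rw [loewy_natCast_succ, loewy_natCast_succ]
    have hinj : Function.Injective
        (mapQ _ _ K.subtype (map_le_iff_le_comap.mp (map_loewy_le _ n))) := by
      rw [← LinearMap.ker_eq_bot]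
      exact ker_liftQ_eq_bot _ _ _ (by rwa [LinearMap.ker_comp, ker_mkQ])
    exact fun x hx => comap_socle_le hinj hx

theorem loewy_eq_top_of_loewy_self_eq_top {n : ℕ} (h : loewy R R n = ⊤) : loewy R M n = ⊤ :=
  eq_top_iff.mpr fun x _ => by
    simpa using map_loewy_le (LinearMap.toSpanSingleton R M x) n ⟨1, h ▸ trivial, rfl⟩

theorem isSemisimpleModule_quotient_loewy {n : ℕ} (h : loewy R M (n + 1 : ℕ) = ⊤) :
    IsSemisimpleModule R (M ⧸ loewy R M n) := by
  rw [loewy_natCast_succ] at h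
  refine isSemisimpleModule_of_socle_eq_top ?_
  simpa only [map_comap_eq_of_surjective (mkQ_surjective _), Submodule.map_top, range_mkQ] using
    congrArg (map (loewy R M n).mkQ) h

end Loewy

section Projective

variable {R M N : Type*} [Ring R] [AddCommGroup M] [Module R M] [AddCommGroup N] [Module R N]

theorem LinearMap.ker_eq_range_of_rangeRestrict_comp_eq_id {f : M →ₗ[R] N}
    {s : LinearMap.range f →ₗ[R] M} (hs : f.rangeRestrict ∘ₗ s = LinearMap.id) :
    LinearMap.ker f = LinearMap.range (LinearMap.id - s ∘ₗ f.rangeRestrict) := by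
  apply le_antisymm
  · intro x hx
    have : f.rangeRestrict x = 0 := Subtype.ext hx
    exact ⟨x, by simp [this]⟩
  · rintro _ ⟨x, rfl⟩
    have : f.rangeRestrict (x - s (f.rangeRestrict x)) = 0 := by
      rw [map_sub, ← LinearMap.comp_apply _ s, hs, LinearMap.id_apply, sub_self]
    exact LinearMap.mem_ker.2 (congrArg Subtype.val this)

theorem LinearMap.fg_ker_of_projective_range [Module.Finite R M] (f : M →ₗ[R] N)
    [Module.Projective R (LinearMap.range f)] : (LinearMap.ker f).FG := by
  obtain ⟨s, hs⟩ := f.rangeRestrict.exists_rightInverse_of_surjective f.range_rangeRestrict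
  rw [LinearMap.ker_eq_range_of_rangeRestrict_comp_eq_id hs, LinearMap.range_eq_map]
  exact Module.Finite.fg_top.map _

theorem Module.Projective.of_ker_of_range (f : M →ₗ[R] N)
    [Module.Projective R (LinearMap.ker f)] [Module.Projective R (LinearMap.range f)] :
    Module.Projective R M := by
  obtain ⟨s, hs⟩ := f.rangeRestrict.exists_rightInverse_of_surjective f.range_rangeRestrict
  have hker : ∀ x, x - s (f.rangeRestrict x) ∈ LinearMap.ker f := fun x => by
    rw [LinearMap.ker_eq_range_of_rangeRestrict_comp_eq_id hs]; exact ⟨x, rfl⟩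
  let r : M →ₗ[R] LinearMap.ker f :=
    LinearMap.codRestrict _ (LinearMap.id - s ∘ₗ f.rangeRestrict) hker
  refine .of_split (r.prod f.rangeRestrict) ((LinearMap.ker f).subtype.coprod s)
    (LinearMap.ext fun x => ?_)
  simp [r]

end Projective

section Chain

variable {R M N P Q : Type*} [Ring R] [AddCommGroup M] [Module R M] [AddCommGroup N] [Module R N]
  [AddCommGroup P] [Module R P] [AddCommGroup Q] [Module R Q]

theorem Submodule.exists_mem_of_monotone_of_iSup_eq_top {F : ℕ → Submodule R M} (hF : Monotone F)
    (htop : ⨆ n, F n = ⊤) (x : M) : ∃ n, x ∈ F n :=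
  (mem_iSup_of_directed F hF.directed_le).1 (htop ▸ mem_top)

theorem exists_lift_extending_of_retraction {i : M →ₗ[R] N} {r : N →ₗ[R] M}
    (hri : r ∘ₗ i = LinearMap.id) [Module.Projective R N] {π : P →ₗ[R] Q}
    (hπ : Function.Surjective π) (g : N →ₗ[R] Q) (s : M →ₗ[R] P)
    (hs : π ∘ₗ s = g ∘ₗ i) :
    ∃ s' : N →ₗ[R] P, π ∘ₗ s' = g ∧ s' ∘ₗ i = s := by
  obtain ⟨h, hh⟩ := Module.projective_lifting_property π g hπ
  refine ⟨s ∘ₗ r + h ∘ₗ (LinearMap.id - i ∘ₗ r), LinearMap.ext fun x => ?_,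
    LinearMap.ext fun x => ?_⟩
  · have h₁ := LinearMap.congr_fun hs (r x)
    have h₂ := LinearMap.congr_fun hh (x - i (r x))
    simp only [LinearMap.comp_apply] at h₁ h₂
    change π (s (r x) + h (x - i (r x))) = g x
    rw [map_add, h₁, h₂, map_sub, add_sub_cancel]
  · have := LinearMap.congr_fun hri x
    simp only [LinearMap.comp_apply, LinearMap.id_apply] at this
    simp [this]

theorem exists_linearMap_comp_subtype_eq {F : ℕ → Submodule R M} (hF : Monotone F)
    (htop : ⨆ n, F n = ⊤) {f : ∀ n, F n →ₗ[R] N}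
    (hf : ∀ n, f (n + 1) ∘ₗ inclusion (hF n.le_succ) = f n) :
    ∃ g : M →ₗ[R] N, ∀ n, g ∘ₗ (F n).subtype = f n := by
  have hf' : ∀ m n (h : m ≤ n) (x : F m), f n (inclusion (hF h) x) = f m x := by
    intro m n h
    induction n, h using Nat.le_induction with
    | base => exact fun _ => rfl
    | succ n hmn ih => exact fun x => (LinearMap.congr_fun (hf n) _).trans (ih x)
  choose idx hidx using exists_mem_of_monotone_of_iSup_eq_top hF htop
  have key : ∀ x n (hx : x ∈ F n), f (idx x) ⟨x, hidx x⟩ = f n ⟨x, hx⟩ := fun x n hx =>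
    (hf' _ _ (le_max_left (idx x) n) _).symm.trans (hf' _ _ (le_max_right (idx x) n) ⟨x, hx⟩)
  refine ⟨{ toFun := fun x => f (idx x) ⟨x, hidx x⟩, map_add' := ?_, map_smul' := ?_ },
    fun n => LinearMap.ext fun x => key _ _ x.2⟩
  · intro x y
    have hx := hF (le_max_left (idx x) (idx y)) (hidx x)
    have hy := hF (le_max_right (idx x) (idx y)) (hidx y)
    rw [key x _ hx, key y _ hy, key _ _ (add_mem hx hy), ← map_add]
    rfl
  · intro c x
    rw [key _ _ (smul_mem _ c (hidx x)), RingHom.id_apply, ← map_smul]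
    rfl

theorem exists_compatible_lifts {F : ℕ → Submodule R M} (hF : Monotone F)
    [∀ n, Module.Projective R (F n)]
    (hr : ∀ n, ∃ r : F (n + 1) →ₗ[R] F n,
      r ∘ₗ inclusion (hF n.le_succ) = LinearMap.id)
    {π : P →ₗ[R] M} (hπ : Function.Surjective π) :
    ∃ s : ∀ n, F n →ₗ[R] P, ∀ n, π ∘ₗ s n = (F n).subtype ∧
      s (n + 1) ∘ₗ inclusion (hF n.le_succ) = s n := by
  obtain ⟨s₀, hs₀⟩ := Module.projective_lifting_property π (F 0).subtype hπ
  have step : ∀ n (s : F n →ₗ[R] P), π ∘ₗ s = (F n).subtype →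
      ∃ s' : F (n + 1) →ₗ[R] P,
        π ∘ₗ s' = (F (n + 1)).subtype ∧ s' ∘ₗ inclusion (hF n.le_succ) = s := by
    intro n s hs
    obtain ⟨r, hr⟩ := hr n
    exact exists_lift_extending_of_retraction hr hπ _ s (by rw [hs, subtype_comp_inclusion])
  choose next hnext using step
  let t : ∀ n, {s : F n →ₗ[R] P // π ∘ₗ s = (F n).subtype} := fun n =>
    Nat.rec ⟨s₀, hs₀⟩ (fun n s => ⟨next n s.1 s.2, (hnext n s.1 s.2).1⟩) n
  exact ⟨fun n => (t n).1, fun n => ⟨(t n).2, (hnext n _ (t n).2).2⟩⟩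

theorem Module.projective_of_iSup_eq_top {F : ℕ → Submodule R M} (hF : Monotone F)
    (htop : ⨆ n, F n = ⊤) [∀ n, Module.Projective R (F n)]
    (hr : ∀ n, ∃ r : F (n + 1) →ₗ[R] F n,
      r ∘ₗ inclusion (hF n.le_succ) = LinearMap.id) :
    Module.Projective R M := by
  obtain ⟨s, hs⟩ := exists_compatible_lifts hF hr (Finsupp.linearCombination_id_surjective R M)
  obtain ⟨g, hg⟩ := exists_linearMap_comp_subtype_eq hF htop fun n => (hs n).2
  refine Module.projective_def'.2 ⟨g, LinearMap.ext fun x => ?_⟩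
  obtain ⟨n, hn⟩ := exists_mem_of_monotone_of_iSup_eq_top hF htop x
  have := LinearMap.congr_fun (hs n).1 ⟨x, hn⟩
  rw [← hg n] at this
  exact this

end Chain

def FGSubmodulesAreRetracts (R M : Type*) [Ring R] [AddCommGroup M] [Module R M] : Prop :=
  ∀ N : Submodule R M, N.FG → ∃ p : M →ₗ[R] N, p ∘ₗ N.subtype = LinearMap.id

namespace FGSubmodulesAreRetracts

variable {R M M' : Type*} [Ring R] [AddCommGroup M] [Module R M] [AddCommGroup M'] [Module R M']

theorem of_retract (h : FGSubmodulesAreRetracts R M) (i : M' →ₗ[R] M) (r : M →ₗ[R] M')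
    (hri : r ∘ₗ i = LinearMap.id) : FGSubmodulesAreRetracts R M' := by
  intro N hN
  obtain ⟨p, hp⟩ := h (N.map i) (hN.map i)
  have hr : ∀ y ∈ N.map i, r y ∈ N := by
    rintro _ ⟨x, hx, rfl⟩
    rwa [← LinearMap.comp_apply, hri, LinearMap.id_apply]
  refine ⟨r.restrict hr ∘ₗ p ∘ₗ i, LinearMap.ext fun x => Subtype.ext ?_⟩
  have := congrArg Subtype.val (LinearMap.congr_fun hp ⟨i x, x, x.2, rfl⟩)
  simp only [LinearMap.comp_apply, subtype_apply, LinearMap.id_apply] at this ⊢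
  rw [LinearMap.restrict_apply]
  change r _ = _
  rw [this]
  exact LinearMap.congr_fun hri x

variable {P Q : Type*} [AddCommGroup P] [Module R P] [AddCommGroup Q] [Module R Q]

theorem _root_.Submodule.fg_comap_inl {N : Submodule R (P × Q)} (hN : N.FG)
    [Module.Projective R (LinearMap.range (LinearMap.snd R P Q ∘ₗ N.subtype))] :
    (N.comap (LinearMap.inl R P Q)).FG := by
  have : Module.Finite R N := Module.Finite.iff_fg.2 hN
  have hK : N.comap (LinearMap.inl R P Q) =
      (LinearMap.ker (LinearMap.snd R P Q ∘ₗ N.subtype)).map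
        (LinearMap.fst R P Q ∘ₗ N.subtype) := by
    ext p
    refine ⟨fun hp => ⟨⟨(p, 0), hp⟩, rfl, rfl⟩, ?_⟩
    rintro ⟨y, hy, rfl⟩
    change ((y : P × Q).1, (0 : Q)) ∈ N
    convert y.2 using 1
    exact Prod.ext rfl hy.symm
  exact hK ▸ (LinearMap.fg_ker_of_projective_range _).map _

theorem prod (hP : FGSubmodulesAreRetracts R P) (hQ : FGSubmodulesAreRetracts R Q)
    [Module.Projective R Q] : FGSubmodulesAreRetracts R (P × Q) := by
  intro N hN
  have : Module.Finite R N := Module.Finite.iff_fg.2 hN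
  let π : N →ₗ[R] Q := LinearMap.snd R P Q ∘ₗ N.subtype
  obtain ⟨ρ, hρ⟩ := hQ (LinearMap.range π) <| by
    rw [LinearMap.range_eq_map]; exact Module.Finite.fg_top.map π
  have : Module.Projective R (LinearMap.range π) := .of_split _ ρ hρ
  obtain ⟨s, hs⟩ := π.rangeRestrict.exists_rightInverse_of_surjective π.range_rangeRestrict
  let K : Submodule R P := N.comap (LinearMap.inl R P Q)
  obtain ⟨ρK, hρK⟩ := hP K (fg_comap_inl hN)
  let ι : K →ₗ[R] N :=
    LinearMap.codRestrict N (LinearMap.inl R P Q ∘ₗ K.subtype) fun k => k.2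
  -- `x ∈ N` splits as `u x + (x - u x)`, with `u x` lifting `snd x` and `x - u x ∈ P × 0`
  let u : P × Q →ₗ[R] N := s ∘ₗ ρ ∘ₗ LinearMap.snd R P Q
  refine ⟨u + ι ∘ₗ ρK ∘ₗ LinearMap.fst R P Q ∘ₗ (LinearMap.id - N.subtype ∘ₗ u),
    LinearMap.ext fun x => ?_⟩
  have hux : u x = s (π.rangeRestrict x) :=
    congrArg s (LinearMap.congr_fun hρ (π.rangeRestrict x))
  have hπ : π (u x) = π x := by
    rw [hux]; exact congrArg Subtype.val (LinearMap.congr_fun hs (π.rangeRestrict x))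
  have hK : (x : P × Q).1 - (u x : P × Q).1 ∈ K := by
    change ((x : P × Q).1 - (u x : P × Q).1, (0 : Q)) ∈ N
    convert sub_mem x.2 (u x).2 using 1
    exact Prod.ext rfl (sub_eq_zero.2 hπ.symm).symm
  have hρKx : ρK ((x : P × Q).1 - (u x : P × Q).1) = ⟨_, hK⟩ :=
    LinearMap.congr_fun hρK ⟨_, hK⟩
  apply Subtype.ext
  change (u x : P × Q) + (ι (ρK ((x : P × Q).1 - (u x : P × Q).1)) : P × Q) = x
  rw [hρKx]
  exact Prod.ext (add_sub_cancel _ _) ((add_zero _).trans hπ)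

end FGSubmodulesAreRetracts

namespace IsVonNeumannRegularRing

variable {R : Type u} [Ring R]

theorem exists_isIdempotentElem_span_singleton_eq (hR : IsVonNeumannRegularRing R) (x : R) :
    ∃ e : R, IsIdempotentElem e ∧ span R {x} = span R {e} := by
  obtain ⟨y, hy⟩ := hR x
  refine ⟨y * x, by rw [IsIdempotentElem, mul_assoc, ← mul_assoc x, hy], le_antisymm ?_ ?_⟩
  · exact (span_singleton_le_iff_mem _ _).2 <|
      mem_span_singleton.2 ⟨x, by rw [smul_eq_mul, ← mul_assoc, hy]⟩
  · exact (span_singleton_le_iff_mem _ _).2 <| smul_mem _ y (mem_span_singleton_self x)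

/-- With `f` an idempotent generator of `R (x - x e)`, one has `f e = 0`, and `e + f - e f` is an
idempotent generating `R e + R f = R e + R x`. -/
theorem exists_isIdempotentElem_span_sup_eq (hR : IsVonNeumannRegularRing R) {e : R}
    (he : IsIdempotentElem e) (x : R) :
    ∃ h : R, IsIdempotentElem h ∧ span R {e} ⊔ span R {x} = span R {h} := by
  obtain ⟨f, hf, hxf⟩ := hR.exists_isIdempotentElem_span_singleton_eq (x - x * e)
  have hfe : f * e = 0 := by
    obtain ⟨r, hr⟩ := mem_span_singleton.1 (hxf ▸ mem_span_singleton_self f)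
    rw [← hr, smul_eq_mul, mul_assoc, sub_mul, mul_assoc, he.eq, sub_self, mul_zero]
  have hsup : span R {e} ⊔ span R {x} = span R {e} ⊔ span R {f} := by
    rw [← hxf]
    refine le_antisymm (sup_le le_sup_left ?_) (sup_le le_sup_left ?_) <;>
      rw [span_singleton_le_iff_mem]
    · have : (x - x * e) + x • e ∈ span R {e} ⊔ span R {x - x * e} :=
        add_mem (mem_sup_right (mem_span_singleton_self _))
          (mem_sup_left (smul_mem _ x (mem_span_singleton_self e)))
      rwa [smul_eq_mul, sub_add_cancel] at this
    · exact sub_mem (mem_sup_right (mem_span_singleton_self x))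
        (mem_sup_left (smul_mem _ x (mem_span_singleton_self e)))
  set h := e + f - e * f
  have hhe : h * e = e := by simp only [h, sub_mul, add_mul, he.eq, hfe, mul_assoc, mul_zero]; abel
  have hhf : h * f = f := by simp only [h, sub_mul, add_mul, hf.eq, mul_assoc]; abel
  refine ⟨h, ?_, ?_⟩
  · calc h * h = h * e + h * f - h * e * f := by simp only [h, mul_sub, mul_add, mul_assoc]
      _ = h := by rw [hhe, hhf]
  rw [hsup]
  refine le_antisymm (sup_le ?_ ?_) ?_ <;> rw [span_singleton_le_iff_mem]
  · refine mem_span_singleton.2 ⟨e, ?_⟩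
    simp only [h, smul_eq_mul, mul_sub, mul_add, ← mul_assoc, he.eq]
    abel
  · refine mem_span_singleton.2 ⟨f, ?_⟩
    simp only [h, smul_eq_mul, mul_sub, mul_add, ← mul_assoc, hf.eq, hfe, zero_mul]
    abel
  · exact sub_mem (add_mem (mem_sup_left (mem_span_singleton_self e))
      (mem_sup_right (mem_span_singleton_self f)))
      (mem_sup_right (smul_mem _ e (mem_span_singleton_self f)))

theorem exists_isIdempotentElem_eq_span_of_fg (hR : IsVonNeumannRegularRing R)
    {I : Submodule R R} (hI : I.FG) : ∃ e : R, IsIdempotentElem e ∧ I = span R {e} := by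
  classical
  obtain ⟨s, rfl⟩ := hI
  induction s using Finset.induction_on with
  | empty => exact ⟨0, .zero, by simp⟩
  | insert x s _ ih =>
    obtain ⟨e, he, hs⟩ := ih
    obtain ⟨h, hh, hsup⟩ := hR.exists_isIdempotentElem_span_sup_eq he x
    exact ⟨h, hh, by rw [Finset.coe_insert, span_insert, hs, sup_comm, hsup]⟩

theorem fgSubmodulesAreRetracts_self (hR : IsVonNeumannRegularRing R) :
    FGSubmodulesAreRetracts R R := by
  intro I hI
  obtain ⟨e, he, rfl⟩ := hR.exists_isIdempotentElem_eq_span_of_fg hI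
  refine ⟨LinearMap.codRestrict _ (LinearMap.toSpanSingleton R R e)
    fun r => smul_mem _ r (mem_span_singleton_self e), LinearMap.ext fun x => Subtype.ext ?_⟩
  obtain ⟨r, hr⟩ := mem_span_singleton.1 x.2
  change (x : R) • e = x
  rw [← hr, smul_eq_mul, smul_eq_mul, mul_assoc, he.eq]

theorem fgSubmodulesAreRetracts_pi (hR : IsVonNeumannRegularRing R) (n : ℕ) :
    FGSubmodulesAreRetracts R (Fin n → R) := by
  induction n with
  | zero => exact fun N _ => ⟨0, LinearMap.ext fun _ => Subsingleton.elim _ _⟩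
  | succ n ih =>
    let e := Fin.consLinearEquiv R fun _ : Fin (n + 1) => R
    exact (hR.fgSubmodulesAreRetracts_self.prod ih).of_retract e.symm.toLinearMap e.toLinearMap
      (LinearMap.ext e.apply_symm_apply)

theorem fgSubmodulesAreRetracts (hR : IsVonNeumannRegularRing R) {P : Type*} [AddCommGroup P]
    [Module R P] [Module.Finite R P] [Module.Projective R P] : FGSubmodulesAreRetracts R P := by
  obtain ⟨n, τ, hτ⟩ := Module.Finite.exists_fin' R P
  obtain ⟨s, hs⟩ := τ.exists_rightInverse_of_surjective (LinearMap.range_eq_top.2 hτ)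
  exact (hR.fgSubmodulesAreRetracts_pi n).of_retract s τ hs

theorem exists_retraction_inclusion (hR : IsVonNeumannRegularRing R) {M : Type*}
    [AddCommGroup M] [Module R M] {N N' : Submodule R M} (h : N ≤ N') (hN : N.FG)
    [Module.Finite R N'] [Module.Projective R N'] :
    ∃ r : N' →ₗ[R] N, r ∘ₗ inclusion h = LinearMap.id := by
  have : Module.Finite R N := Module.Finite.iff_fg.2 hN
  let e := comapSubtypeEquivOfLe h
  obtain ⟨p, hp⟩ := hR.fgSubmodulesAreRetracts (N.comap N'.subtype)
    (Module.Finite.iff_fg.1 (.equiv e.symm))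
  refine ⟨e.toLinearMap ∘ₗ p, LinearMap.ext fun x => ?_⟩
  have hpx : p (inclusion h x) = ⟨inclusion h x, x.2⟩ := LinearMap.congr_fun hp ⟨_, x.2⟩
  simp only [LinearMap.comp_apply, LinearEquiv.coe_coe, hpx]
  rfl

end IsVonNeumannRegularRing

section Semisimple

variable {R : Type u} [Ring R]

theorem IsVonNeumannRegularRing.exists_isCompl_span_singleton_quotient
    (hR : IsVonNeumannRegularRing R) {P : Submodule R R} (hP : ∀ p ∈ P, ∀ r, p * r ∈ P)
    (x : R ⧸ P) : ∃ W, IsCompl (span R {x}) W := by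
  obtain ⟨a, rfl⟩ := P.mkQ_surjective x
  obtain ⟨e, he, hae⟩ := hR.exists_isIdempotentElem_span_singleton_eq a
  let φ := P.mapQ P (LinearMap.toSpanSingleton R R e) fun p hp => hP p hp e
  have hφ : IsIdempotentElem φ := LinearMap.ext fun y => by
    obtain ⟨r, rfl⟩ := P.mkQ_surjective y
    change P.mkQ ((r • e) • e) = P.mkQ (r • e)
    rw [smul_eq_mul, smul_eq_mul, mul_assoc, he.eq]
  refine ⟨LinearMap.ker φ, ?_⟩
  convert LinearMap.IsIdempotentElem.isCompl hφ
  rw [show LinearMap.range φ = _ from range_mapQ (p := P) (q := P) _ _,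
    ← LinearMap.span_singleton_eq_range, ← hae, map_span, Set.image_singleton]

theorem IsSemisimpleModule.of_isArtinian_of_isCompl_span_singleton {A : Type*} [AddCommGroup A]
    [Module R A] [IsArtinian R A] (h : ∀ x : A, ∃ W, IsCompl (span R {x}) W) :
    IsSemisimpleModule R A := by
  refine (isSemisimpleModule_iff R A).2 ⟨fun U => ?_⟩
  obtain ⟨V, hV, hmin⟩ := wellFounded_lt.has_min {V | U ⊔ V = ⊤} ⟨⊤, sup_top_eq _⟩
  refine ⟨V, disjoint_iff.2 ?_, codisjoint_iff.2 hV⟩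
  by_contra hUV
  -- a nonzero `w ∈ U ⊓ V` lets us shrink `V` to `W ⊓ V`, where `W` is a complement of `R w`
  obtain ⟨w, hw, hw0⟩ := exists_mem_ne_zero_of_ne_bot hUV
  obtain ⟨W, hW⟩ := h w
  have hwU := (span_singleton_le_iff_mem _ _).2 (mem_inf.1 hw).1
  have hwV := (span_singleton_le_iff_mem _ _).2 (mem_inf.1 hw).2
  have hV' : span R {w} ⊔ W ⊓ V = V := by
    rw [← sup_inf_assoc_of_le _ hwV, hW.sup_eq_top, top_inf_eq]
  refine hmin (W ⊓ V) ?_ (inf_le_right.lt_of_ne fun heq => hw0 ?_)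
  · calc U ⊔ W ⊓ V = U ⊔ (span R {w} ⊔ W ⊓ V) := by rw [← sup_assoc, sup_eq_left.2 hwU]
      _ = ⊤ := by rw [hV']; exact hV
  · have : w ∈ span R {w} ⊓ W :=
      ⟨mem_span_singleton_self w, (heq.symm ▸ (mem_inf.1 hw).2 : w ∈ W ⊓ V).1⟩
    rwa [hW.inf_eq_bot, mem_bot] at this

theorem isArtinian_quotient_annihilator (hpfa : HasPrimitiveFactorsArtinian R) (C : Type u)
    [AddCommGroup C] [Module R C] [IsSemisimpleModule R C] [Module.Finite R C] :
    IsArtinian R (R ⧸ (Module.annihilator R C : Submodule R R)) := by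
  obtain ⟨n, S, e, hS⟩ := IsSemisimpleModule.exists_linearEquiv_fin_dfinsupp R C
  have (i : Fin n) : IsArtinian R (R ⧸ (Module.annihilator R (S i) : Submodule R R)) :=
    hpfa _ (hS i)
  let Θ := LinearMap.pi fun i => (Module.annihilator R (S i) : Submodule R R).mkQ
  have hker : LinearMap.ker Θ = Module.annihilator R C := by
    rw [LinearMap.ker_pi, e.annihilator_eq, Module.annihilator_dfinsupp]
    simp [ker_mkQ]
  exact isArtinian_of_injective ((Module.annihilator R C : Submodule R R).liftQ Θ hker.ge)
    (LinearMap.ker_eq_bot.1 (ker_liftQ_eq_bot' _ _ hker.symm))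

theorem IsVonNeumannRegularRing.baer (hR : IsVonNeumannRegularRing R)
    (hpfa : HasPrimitiveFactorsArtinian R) (C : Type u) [AddCommGroup C] [Module R C]
    [IsSemisimpleModule R C] [Module.Finite R C] : Module.Baer R C := by
  let P : Submodule R R := Module.annihilator R C
  have hP : ∀ p ∈ P, ∀ r : R, p * r ∈ P := fun p hp r =>
    Module.mem_annihilator.2 fun c => by rw [mul_smul, Module.mem_annihilator.1 hp]
  have := isArtinian_quotient_annihilator hpfa C
  have := IsSemisimpleModule.of_isArtinian_of_isCompl_span_singleton
    (hR.exists_isCompl_span_singleton_quotient hP)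
  intro I f
  let K : Submodule R I := P.comap I.subtype
  -- `f` vanishes on `I ∩ P`: writing `u = (u y) u`, `f u = u • (y • f u) = 0`
  have hK : K ≤ LinearMap.ker f := fun u hu => by
    obtain ⟨y, hy⟩ := hR u
    have : u = (u.1 * y) • u := Subtype.ext hy.symm
    rw [LinearMap.mem_ker, this, map_smul, mul_smul,
      Module.mem_annihilator.1 (show (u : R) ∈ P from hu)]
  have hι : Function.Injective (K.mapQ P I.subtype le_rfl) :=
    LinearMap.ker_eq_bot.1 (ker_liftQ_eq_bot' _ _ (by rw [LinearMap.ker_comp, ker_mkQ]))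
  obtain ⟨g, hg⟩ := IsSemisimpleModule.extension_property _ hι (K.liftQ f hK)
  exact ⟨g ∘ₗ P.mkQ, fun x hx => LinearMap.congr_fun hg (K.mkQ ⟨x, hx⟩)⟩

end Semisimple

section Layers

variable {R : Type u} [Ring R]

instance isSemisimpleModule_loewyLayer (α : Ordinal.{u}) :
    IsSemisimpleModule R (loewyLayer R α) := by
  rw [show loewyLayer R α = socle R (R ⧸ loewy R R α) by
    rw [loewyLayer, loewy_succ, map_comap_eq, range_mkQ, top_inf_eq]]
  infer_instance

theorem layerProj_surjective (α : Ordinal.{u}) : Function.Surjective (layerProj R α) := by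
  rintro ⟨_, s, hs, rfl⟩
  exact ⟨⟨s, hs⟩, rfl⟩

theorem layerProj_zero_injective : Function.Injective (layerProj R 0) := fun x y hxy => by
  have : (x : R) - y ∈ loewy R R 0 := (Submodule.Quotient.eq _).1 (congrArg Subtype.val hxy)
  rw [loewy_zero, mem_bot, sub_eq_zero] at this
  exact Subtype.ext this

theorem IsWeaklyRProjective.exists_lift {M : Type u} [AddCommGroup M] [Module R M]
    (hM : IsWeaklyRProjective R M) (α : Ordinal.{u}) (φ : M →ₗ[R] loewyLayer R α)
    (hφ : (LinearMap.range φ).FG) :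
    ∃ ψ : M →ₗ[R] loewy R R (α + 1), layerProj R α ∘ₗ ψ = φ := by
  rcases eq_or_ne α 0 with rfl | hα
  · let e := LinearEquiv.ofBijective _
      ⟨layerProj_zero_injective (R := R), layerProj_surjective 0⟩
    exact ⟨e.symm.toLinearMap ∘ₗ φ, LinearMap.ext fun x => e.apply_symm_apply (φ x)⟩
  · exact hM α (pos_iff_ne_zero.2 hα) φ hφ

theorem IsWeaklyRProjective.submodule (hR : IsVonNeumannRegularRing R)
    (hpfa : HasPrimitiveFactorsArtinian R) {M : Type u} [AddCommGroup M] [Module R M]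
    (hM : IsWeaklyRProjective R M) (N : Submodule R M) : IsWeaklyRProjective R N := by
  intro α hα φ hφ
  have : Module.Finite R (LinearMap.range φ) := Module.Finite.iff_fg.2 hφ
  obtain ⟨g, hg⟩ := (hR.baer hpfa (LinearMap.range φ)).extension_property N.subtype
    N.injective_subtype φ.rangeRestrict
  have hg_surj : Function.Surjective g := fun y => by
    obtain ⟨x, rfl⟩ := φ.surjective_rangeRestrict y
    exact ⟨x, LinearMap.congr_fun hg x⟩
  obtain ⟨ψ, hψ⟩ := hM α hα ((LinearMap.range φ).subtype ∘ₗ g) <| by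
    rwa [LinearMap.range_comp, LinearMap.range_eq_top.2 hg_surj, Submodule.map_top,
      range_subtype]
  refine ⟨ψ ∘ₗ N.subtype, ?_⟩
  rw [← LinearMap.comp_assoc, hψ, LinearMap.comp_assoc, hg]
  rfl

theorem exists_injective_loewyLayer_of_isSimpleModule {m : ℕ} (hlen : loewy R R m = ⊤)
    (T : Type u) [AddCommGroup T] [Module R T] [IsSimpleModule R T] :
    ∃ (n : ℕ) (e : T →ₗ[R] loewyLayer R n), Function.Injective e := by
  classical
  have := IsSimpleModule.nontrivial R T
  let A : Submodule R R := Module.annihilator R T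
  have hex : ∃ n : ℕ, ¬loewy R R n ≤ A := ⟨m, fun h => not_subsingleton T <|
    Module.annihilator_eq_top_iff.1 (top_le_iff.1 (hlen ▸ h))⟩
  obtain ⟨n, hn⟩ : ∃ n, Nat.find hex = n + 1 := Nat.exists_eq_succ_of_ne_zero fun h0 =>
    Nat.find_spec hex (by rw [h0, Nat.cast_zero, loewy_zero]; exact bot_le)
  have hle : loewy R R n ≤ A := not_not.1 (Nat.find_min hex (by omega))
  obtain ⟨s, hs, hsA⟩ := SetLike.not_le_iff_exists.1 (hn ▸ Nat.find_spec hex)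
  obtain ⟨t, ht⟩ : ∃ t : T, s • t ≠ 0 := by
    by_contra! h
    exact hsA (Module.mem_annihilator.2 h)
  -- `r ↦ r t` factors through `R ⧸ S_n`, and is nonzero on the layer `S_{n+1} / S_n`
  let g := (loewy R R n).liftQ (LinearMap.toSpanSingleton R T t)
    (fun r hr => Module.mem_annihilator.1 (hle hr) t) ∘ₗ (loewyLayer R n).subtype
  have hg : Function.Surjective g := by
    refine LinearMap.range_eq_top.1 ((eq_bot_or_eq_top (LinearMap.range g)).resolve_left
      fun h => ht ?_)
    have := LinearMap.mem_range_self g ⟨(loewy R R n).mkQ s, s, by rwa [← Nat.cast_succ], rfl⟩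
    rwa [h, mem_bot] at this
  obtain ⟨e, he⟩ := IsSemisimpleModule.lifting_property g hg LinearMap.id
  exact ⟨n, e, Function.LeftInverse.injective (g := g) fun x => LinearMap.congr_fun he x⟩

end Layers

section Finite

variable {R : Type u} [Ring R]

theorem IsWeaklyRProjective.exists_ker_le {m : ℕ} (hlen : loewy R R m = ⊤) {M : Type u}
    [AddCommGroup M] [Module R M] [Module.Finite R M] (hM : IsWeaklyRProjective R M)
    (L : Submodule R M) [IsSemisimpleModule R (M ⧸ L)] :
    ∃ (k : ℕ) (Ψ : M →ₗ[R] Fin k → R), LinearMap.ker Ψ ≤ L := by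
  obtain ⟨k, S, e, hS⟩ := IsSemisimpleModule.exists_linearEquiv_fin_dfinsupp R (M ⧸ L)
  choose n ι hι using fun i => exists_injective_loewyLayer_of_isSimpleModule hlen (S i)
  let φ (i : Fin k) : M →ₗ[R] loewyLayer R (n i) :=
    ι i ∘ₗ DFinsupp.lapply i ∘ₗ e.toLinearMap ∘ₗ L.mkQ
  choose ψ hψ using fun i => hM.exists_lift (n i) (φ i)
    (by rw [LinearMap.range_eq_map]; exact Module.Finite.fg_top.map _)
  refine ⟨k, LinearMap.pi fun i => (loewy R R _).subtype ∘ₗ ψ i, fun x hx => ?_⟩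
  have hφ (i : Fin k) : φ i x = 0 := by
    have : ψ i x = 0 := Subtype.ext (congrFun hx i)
    rw [← hψ i, LinearMap.comp_apply, this, map_zero]
  have : e (L.mkQ x) = 0 := DFinsupp.ext fun i => hι i (by simpa [φ] using hφ i)
  simpa using this

theorem IsWeaklyRProjective.projective_of_finite (hR : IsVonNeumannRegularRing R)
    (hpfa : HasPrimitiveFactorsArtinian R) {m : ℕ} (hlen : loewy R R m = ⊤) {M : Type u}
    [AddCommGroup M] [Module R M] [Module.Finite R M] (hM : IsWeaklyRProjective R M) :
    Module.Projective R M := by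
  suffices ∀ n : ℕ, ∀ (M : Type u) [AddCommGroup M] [Module R M] [Module.Finite R M],
      IsWeaklyRProjective R M → loewy R M n = ⊤ → Module.Projective R M from
    this m M hM (loewy_eq_top_of_loewy_self_eq_top hlen)
  intro n
  induction n with
  | zero =>
    intro M _ _ _ _ h
    have : Subsingleton M := (Submodule.subsingleton_iff R).1 <|
      subsingleton_iff_bot_eq_top.1 (by rw [← h, Nat.cast_zero, loewy_zero])
    infer_instance
  | succ n ih =>
    intro M _ _ _ hM htop
    have := isSemisimpleModule_quotient_loewy htop
    obtain ⟨k, Ψ, hΨ⟩ := hM.exists_ker_le hlen (loewy R M n)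
    obtain ⟨p, hp⟩ := hR.fgSubmodulesAreRetracts_pi k (LinearMap.range Ψ)
      (by rw [LinearMap.range_eq_map]; exact Module.Finite.fg_top.map _)
    have : Module.Projective R (LinearMap.range Ψ) := .of_split _ p hp
    have : Module.Finite R (LinearMap.ker Ψ) :=
      Module.Finite.iff_fg.2 Ψ.fg_ker_of_projective_range
    have : Module.Projective R (LinearMap.ker Ψ) := ih _ (hM.submodule hR hpfa _)
      (eq_top_iff.2 fun x _ => comap_subtype_loewy_le _ n (hΨ x.2))
    exact .of_ker_of_range Ψ

end Finite

theorem Submodule.exists_monotone_fg_iSup_eq_top {R M : Type*} [Semiring R] [AddCommMonoid M]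
    [Module R M] {S : Set M} (hS : S.Countable) (hspan : span R S = ⊤) :
    ∃ F : ℕ → Submodule R M, Monotone F ∧ (∀ n, (F n).FG) ∧ ⨆ n, F n = ⊤ := by
  obtain ⟨g, hg⟩ := (hS.insert 0).exists_eq_range (Set.insert_nonempty 0 S)
  refine ⟨fun n => span R (g '' Set.Iio n), fun m n h => span_mono (Set.image_mono
    (Set.Iio_subset_Iio h)), fun n => fg_span ((Set.finite_Iio n).image g),
    eq_top_iff.2 (hspan ▸ span_le.2 fun x hx => ?_)⟩
  obtain ⟨i, rfl⟩ : x ∈ Set.range g := hg ▸ Set.mem_insert_of_mem 0 hx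
  exact mem_iSup_of_mem (i + 1) (subset_span ⟨i, Nat.lt_succ_self i, rfl⟩)

theorem countablyGenerated_weaklyRProjective_projective_general
    (R : Type u) [Ring R]
    (hvnr : IsVonNeumannRegularRing R) (hpfa : HasPrimitiveFactorsArtinian R)
    (σ : ℕ)
    (hlen : loewy R R ((σ : Ordinal.{u}) + 1) = ⊤)
    (M : Type u) [AddCommGroup M] [Module R M]
    (hcg : ∃ S : Set M, S.Countable ∧ Submodule.span R S = ⊤)
    (hM : IsWeaklyRProjective R M) :
    Module.Projective R M := by
  obtain ⟨S, hS, hspan⟩ := hcg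
  obtain ⟨F, hF, hfg, htop⟩ := Submodule.exists_monotone_fg_iSup_eq_top hS hspan
  have hlen' : loewy R R ((σ + 1 : ℕ) : Ordinal) = ⊤ := by rwa [Nat.cast_succ]
  have (n : ℕ) : Module.Finite R (F n) := Module.Finite.iff_fg.2 (hfg n)
  have (n : ℕ) : Module.Projective R (F n) :=
    (hM.submodule hvnr hpfa (F n)).projective_of_finite hvnr hpfa hlen'
  exact Module.projective_of_iSup_eq_top hF htop fun n =>
    hvnr.exists_retraction_inclusion (hF n.le_succ) (hfg n)

/-- Over a semiartinian von Neumann regular ring with primitive factors artinian, of finite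
Loewy length `σ + 1` with `σ ≥ 1`, every countably generated weakly `R`-projective module is
projective. -/
theorem countablyGenerated_weaklyRProjective_projective
    (R : Type u) [Ring R] (hsa : IsSemiartinianRing R)
    (hvnr : IsVonNeumannRegularRing R) (hpfa : HasPrimitiveFactorsArtinian R)
    (σ : ℕ) (hσ : 1 ≤ σ)
    (hlen : loewy R R ((σ : Ordinal.{u}) + 1) = ⊤)
    (hne : loewy R R (σ : Ordinal.{u}) ≠ ⊤)
    (M : Type u) [AddCommGroup M] [Module R M]
    (hcg : ∃ S : Set M, S.Countable ∧ Submodule.span R S = ⊤)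
    (hM : IsWeaklyRProjective R M) :
    Module.Projective R M :=
  countablyGenerated_weaklyRProjective_projective_general R hvnr hpfa σ hlen M hcg hM
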